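/- Let Ω be an open subset of ℝ^d, let θ : ℝ^d → ℝ be continuous with compact support contained in Ω, let φ, ψ : ℝ^d → ℝ be continuous and ℤ^d-periodic, and let δ : (0,∞) → (0,∞) be a function with δ(ε) → 0 as ε → 0⁺. Then, as ε → 0⁺, ∫_Ω θ(x) φ(x/ε) ψ(x/(ε δ(ε))) dx converges to (∫_{[0,1]^d} ψ(y) dy) · (∫_{[0,1]^d} φ(z) dz) · (∫_Ω θ(x) dx). -/

import Mathlib

/-!
Put `g_ε = θ · φ(·/ε)` and `η = ε δ(ε)`. For integrable `g` and continuous `ℤ^d`-periodic `ψ`,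
Fubini and periodicity give `∫_{[0,1]^d} ∫ g(x + η t) ψ(x/η) dx dt = (∫ψ)(∫g)`, hence
`|∫ g ψ(·/η) - (∫ψ)(∫g)| ≤ sup|ψ| · sup_{t ∈ [0,1]^d} ‖g(· + η t) - g‖₁`.
For `g_ε` at scale `ε δ(ε)` the right-hand side tends to zero: `θ` is continuous under translation
in `L¹`, and a shift by `ε δ t` moves the argument of `φ(·/ε)` only by `δ t`, which is uniformly
small since `φ` is uniformly continuous. The same estimate for `θ` at scale `ε` gives
`∫ g_ε → (∫φ)(∫θ)`.
-/

open MeasureTheory Filter Topology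

/-- The unit cube `[0,1]^d` in `ℝ^d`, representing the torus `T^d`. -/
def cube (d : ℕ) : Set (Fin d → ℝ) := Set.Icc 0 1

def ZPeriodic {d : ℕ} (φ : (Fin d → ℝ) → ℝ) : Prop :=
  ∀ (x : Fin d → ℝ) (k : Fin d → ℤ), φ (x + fun i => (k i : ℝ)) = φ x

section cube

variable {d : ℕ}

lemma volume_cube : volume (cube d) = 1 := by
  simp [cube, Real.volume_Icc_pi]

instance : IsFiniteMeasure (volume.restrict (cube d)) :=
  isFiniteMeasure_restrict.2 (by simp [volume_cube])

lemma norm_le_one_of_mem_cube {t : Fin d → ℝ} (ht : t ∈ cube d) : ‖t‖ ≤ 1 :=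
  (pi_norm_le_iff_of_nonneg zero_le_one).2 fun i => by
    rw [Real.norm_eq_abs, abs_le]
    exact ⟨by linarith [show (0 : ℝ) ≤ t i from ht.1 i], ht.2 i⟩

lemma norm_smul_le_of_mem_cube (c : ℝ) {t : Fin d → ℝ} (ht : t ∈ cube d) : ‖c • t‖ ≤ ‖c‖ := by
  rw [norm_smul]
  exact mul_le_of_le_one_right (norm_nonneg c) (norm_le_one_of_mem_cube ht)

lemma sub_floor_mem_cube (x : Fin d → ℝ) : (x - fun i => ((⌊x i⌋ : ℤ) : ℝ)) ∈ cube d :=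
  ⟨fun i => by simp [Int.self_sub_floor, Int.fract_nonneg],
    fun i => by simp [Int.self_sub_floor, (Int.fract_lt_one _).le]⟩

end cube

namespace ZPeriodic

variable {d : ℕ} {ψ : (Fin d → ℝ) → ℝ}

lemma sub_intCast (hψ : ZPeriodic ψ) (x : Fin d → ℝ) (k : Fin d → ℤ) :
    ψ (x - fun i => (k i : ℝ)) = ψ x := by
  simpa using (hψ (x - fun i => (k i : ℝ)) k).symm

lemma setIntegral_Icc_add_one (hψ : ZPeriodic ψ) (a : Fin d → ℝ) :
    ∫ x in Set.Icc a (a + 1), ψ x = ∫ x in cube d, ψ x := by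
  -- both integrals equal the integral over the torus of the function induced by `ψ`
  let Ψ : UnitAddTorus (Fin d) → ℝ := fun z => ψ fun i => (AddCircle.equivIco 1 0 (z i) : ℝ)
  have hΨ (x : Fin d → ℝ) : Ψ (fun i => x i) = ψ x := by
    have : (fun i => (AddCircle.equivIco 1 0 (x i : UnitAddCircle) : ℝ))
        = x - fun i => ((⌊x i⌋ : ℤ) : ℝ) := by
      ext i
      simp [AddCircle.coe_equivIco_mk_apply, Int.self_sub_floor]
    simp only [Ψ, this, hψ.sub_intCast]
  have hbox (b : Fin d → ℝ) : ∫ x in Set.Icc b (b + 1), ψ x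
      = ∫ x in {x | ∀ i, x i ∈ Set.Ioc (b i) (b i + 1)}, ψ x := by
    refine setIntegral_congr_set ?_
    have h := (Measure.univ_pi_Ioc_ae_eq_Icc (μ := fun _ : Fin d => (volume : Measure ℝ))
      (f := b) (g := b + 1)).symm
    rw [volume_pi]
    simpa [Set.pi] using h
  rw [hbox, cube, show (Set.Icc 0 1 : Set (Fin d → ℝ)) = Set.Icc 0 (0 + 1) by rw [zero_add], hbox]
  simpa only [hΨ] using (UnitAddTorus.integral_preimage Ψ a).symm.trans
    (UnitAddTorus.integral_preimage Ψ 0)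

lemma integral_cube_sub (hψ : ZPeriodic ψ) (y : Fin d → ℝ) :
    ∫ t in cube d, ψ (y - t) = ∫ t in cube d, ψ t := by
  have hpre : cube d = (fun t => y - t) ⁻¹' Set.Icc (y - 1) (y - 1 + 1) := by
    simp [cube, Set.preimage_const_sub_Icc]
  calc ∫ t in cube d, ψ (y - t)
      = ∫ t in (fun t => y - t) ⁻¹' Set.Icc (y - 1) (y - 1 + 1), ψ (y - t) := by rw [← hpre]
    _ = ∫ t in Set.Icc (y - 1) (y - 1 + 1), ψ t :=
      (Measure.measurePreserving_sub_left volume y).setIntegral_preimage_emb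
        (MeasurableEquiv.subLeft y).measurableEmbedding _ _
    _ = ∫ t in cube d, ψ t := hψ.setIntegral_Icc_add_one _

lemma exists_abs_le (hψ : ZPeriodic ψ) (hψc : Continuous ψ) : ∃ C, ∀ x, |ψ x| ≤ C := by
  obtain ⟨C, hC⟩ := (isCompact_Icc : IsCompact (cube d)).exists_bound_of_continuousOn
    hψc.continuousOn
  exact ⟨C, fun x => hψ.sub_intCast x _ ▸ hC _ (sub_floor_mem_cube x)⟩

lemma uniformContinuous (hψ : ZPeriodic ψ) (hψc : Continuous ψ) : UniformContinuous ψ := by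
  have hK : IsCompact (Set.Icc (-1 : Fin d → ℝ) 2) := isCompact_Icc
  rw [Metric.uniformContinuous_iff]
  intro r hr
  obtain ⟨s, hs, hsK⟩ := Metric.uniformContinuousOn_iff.1
    (hK.uniformContinuousOn_of_continuous hψc.continuousOn) r hr
  refine ⟨min s 1, by positivity, fun {x y} hxy => ?_⟩
  -- translating both points by `⌊x⌋` lands them in the compact box `[-1, 2]^d`
  have hfract (i : Fin d) := Int.self_sub_floor (x i) ▸ Int.fract_nonneg (x i)
  have hfract' (i : Fin d) := Int.self_sub_floor (x i) ▸ Int.fract_lt_one (x i)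
  have hxy_i (i : Fin d) : |y i - x i| < 1 := by
    rw [← Real.dist_eq, dist_comm]
    exact (dist_le_pi_dist x y i).trans_lt (hxy.trans_le (min_le_right _ _))
  have hx : (x - fun i => ((⌊x i⌋ : ℤ) : ℝ)) ∈ Set.Icc (-1 : Fin d → ℝ) 2 := by
    simp only [Set.mem_Icc, Pi.le_def, Pi.sub_apply, Pi.neg_apply, Pi.ofNat_apply]
    exact ⟨fun i => by linarith [hfract i], fun i => by linarith [hfract' i]⟩
  have hy : (y - fun i => ((⌊x i⌋ : ℤ) : ℝ)) ∈ Set.Icc (-1 : Fin d → ℝ) 2 := by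
    simp only [Set.mem_Icc, Pi.le_def, Pi.sub_apply, Pi.neg_apply, Pi.ofNat_apply]
    exact ⟨fun i => by linarith [hfract i, (abs_lt.1 (hxy_i i)).1],
      fun i => by linarith [hfract' i, (abs_lt.1 (hxy_i i)).2]⟩
  rw [← hψ.sub_intCast x fun i => ⌊x i⌋, ← hψ.sub_intCast y fun i => ⌊x i⌋]
  exact hsK _ hx _ hy (by rw [dist_sub_right]; exact hxy.trans_le (min_le_left _ _))

end ZPeriodic

section translationL1Dist

variable {E : Type*} [NormedAddCommGroup E] [MeasureSpace E]

noncomputable def translationL1Dist (g : E → ℝ) (h : E) : ℝ := ∫ x, |g (x + h) - g x|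

lemma translationL1Dist_nonneg (g : E → ℝ) (h : E) : 0 ≤ translationL1Dist g h :=
  integral_nonneg fun _ => abs_nonneg _

variable [BorelSpace E]

lemma tendsto_translationL1Dist_zero [ProperSpace E]
    [IsFiniteMeasureOnCompacts (volume : Measure E)] {g : E → ℝ} (hgc : Continuous g)
    (hgs : HasCompactSupport g) : Tendsto (translationL1Dist g) (𝓝 0) (𝓝 0) := by
  obtain ⟨C, hC⟩ := hgc.bounded_above_of_compact_support hgs
  set K := Metric.cthickening 1 (tsupport g)
  have hK : IsCompact K := hgs.isCompact.cthickening
  have hvanish : ∀ h : E, ‖h‖ < 1 → ∀ x ∉ K, g (x + h) = 0 ∧ g x = 0 := by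
    intro h hh x hx
    refine ⟨image_eq_zero_of_notMem_tsupport fun hmem => hx ?_,
      image_eq_zero_of_notMem_tsupport fun hmem => hx (Metric.self_subset_cthickening _ hmem)⟩
    exact Metric.mem_cthickening_of_dist_le _ _ _ _ hmem (by simpa [dist_eq_norm] using hh.le)
  have hlim := tendsto_integral_filter_of_dominated_convergence (μ := volume)
    (F := fun h x => |g (x + h) - g x|) (f := fun _ => 0) (l := 𝓝 (0 : E))
    (K.indicator fun _ => 2 * C)
    (.of_forall fun h =>
      ((hgc.comp (continuous_add_const h)).sub hgc).abs.aestronglyMeasurable)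
    (by
      filter_upwards [Metric.ball_mem_nhds (0 : E) one_pos] with h hh
      refine .of_forall fun x => ?_
      by_cases hx : x ∈ K
      · rw [Set.indicator_of_mem hx, Real.norm_eq_abs, abs_abs, two_mul]
        exact (abs_sub _ _).trans (add_le_add (hC _) (hC _))
      · obtain ⟨h1, h2⟩ := hvanish h (mem_ball_zero_iff.1 hh) x hx
        simp [h1, h2, Set.indicator_of_notMem hx])
    ((integrableOn_const hK.measure_lt_top.ne).integrable_indicator hK.measurableSet)
    (.of_forall fun x => by
      have hcont : Continuous fun h => |g (x + h) - g x| := by fun_prop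
      simpa using hcont.tendsto 0)
  rw [integral_zero] at hlim
  exact hlim

variable [(volume : Measure E).IsAddRightInvariant]

lemma translationL1Dist_mul_le {θ f : E → ℝ} {C r : ℝ} {h : E} (hθ : Integrable θ)
    (hC : ∀ x, |f x| ≤ C) (hr : ∀ x, |f (x + h) - f x| ≤ r) :
    translationL1Dist (fun x => θ x * f x) h ≤ C * translationL1Dist θ h + r * ∫ x, |θ x| := by
  have hθh : Integrable fun x => |θ (x + h) - θ x| := ((hθ.comp_add_right h).sub hθ).abs
  have hpt (x : E) : |θ (x + h) * f (x + h) - θ x * f x|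
      ≤ C * |θ (x + h) - θ x| + r * |θ x| := by
    calc |θ (x + h) * f (x + h) - θ x * f x|
        = |(θ (x + h) - θ x) * f (x + h) + θ x * (f (x + h) - f x)| := by ring_nf
      _ ≤ |θ (x + h) - θ x| * |f (x + h)| + |θ x| * |f (x + h) - f x| := by
        rw [← abs_mul, ← abs_mul]
        exact abs_add_le _ _
      _ ≤ |θ (x + h) - θ x| * C + |θ x| * r := by gcongr; exacts [hC _, hr x]
      _ = C * |θ (x + h) - θ x| + r * |θ x| := by ring
  calc translationL1Dist (fun x => θ x * f x) h
      ≤ ∫ x, (C * |θ (x + h) - θ x| + r * |θ x|) :=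
        integral_mono_of_nonneg (.of_forall fun _ => abs_nonneg _)
          ((hθh.const_mul C).add (hθ.abs.const_mul r)) (.of_forall hpt)
    _ = C * translationL1Dist θ h + r * ∫ x, |θ x| := by
      rw [integral_add (hθh.const_mul C) (hθ.abs.const_mul r), integral_const_mul,
        integral_const_mul, translationL1Dist]

lemma integral_comp_add_smul_mul [NormedSpace ℝ E] (g ψ : E → ℝ) {η : ℝ} (hη : η ≠ 0) (t : E) :
    ∫ x, g (x + η • t) * ψ (η⁻¹ • x) = ∫ x, g x * ψ (η⁻¹ • x - t) := by
  rw [← integral_add_right_eq_self (fun x => g x * ψ (η⁻¹ • x - t)) (η • t)]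
  simp [smul_add, smul_smul, hη]

end translationL1Dist

section averaging

variable {d : ℕ} {g ψ : (Fin d → ℝ) → ℝ} {C η : ℝ}

lemma integrable_mul_comp_inv_smul_sub (hg : Integrable g) (hψc : Continuous ψ)
    (hC : ∀ y, |ψ y| ≤ C) (η : ℝ) :
    Integrable (fun p : (Fin d → ℝ) × (Fin d → ℝ) => g p.2 * ψ (η⁻¹ • p.2 - p.1))
      ((volume.restrict (cube d)).prod volume) := by
  refine ((integrable_const C).mul_prod hg.abs).mono'
    (hg.aestronglyMeasurable.comp_snd.mul (by fun_prop : Continuous _).aestronglyMeasurable)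
    (.of_forall fun p => ?_)
  rw [Real.norm_eq_abs, abs_mul, mul_comm]
  exact mul_le_mul_of_nonneg_right (hC _) (abs_nonneg _)

lemma integral_cube_integral_comp_add_smul_mul (hg : Integrable g) (hψc : Continuous ψ)
    (hψ : ZPeriodic ψ) (hC : ∀ y, |ψ y| ≤ C) (hη : η ≠ 0) :
    ∫ t in cube d, ∫ x, g (x + η • t) * ψ (η⁻¹ • x) = (∫ y in cube d, ψ y) * ∫ x, g x := by
  simp_rw [integral_comp_add_smul_mul g ψ hη]
  rw [integral_integral_swap (integrable_mul_comp_inv_smul_sub hg hψc hC η)]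
  simp_rw [integral_const_mul, hψ.integral_cube_sub, integral_mul_const, mul_comm]

lemma abs_integral_mul_comp_inv_smul_sub_le (hg : Integrable g) (hψc : Continuous ψ)
    (hψ : ZPeriodic ψ) (hC : ∀ y, |ψ y| ≤ C) (hη : η ≠ 0) {B : ℝ}
    (hB : ∀ t ∈ cube d, translationL1Dist g (η • t) ≤ B) :
    |(∫ x, g x * ψ (η⁻¹ • x)) - (∫ y in cube d, ψ y) * ∫ x, g x| ≤ C * B := by
  have hC0 : 0 ≤ C := (abs_nonneg _).trans (hC 0)
  have hgψ (t : Fin d → ℝ) : Integrable fun x => g (x + η • t) * ψ (η⁻¹ • x) :=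
    (hg.comp_add_right _).mul_bdd (by fun_prop : Continuous _).aestronglyMeasurable
      (.of_forall fun _ => (hC _).trans' (Real.norm_eq_abs _).le)
  have hint : IntegrableOn (fun t => ∫ x, g (x + η • t) * ψ (η⁻¹ • x)) (cube d) := by
    simp_rw [integral_comp_add_smul_mul g ψ hη]
    exact (integrable_mul_comp_inv_smul_sub hg hψc hC η).integral_prod_left
  have hmean : (∫ x, g x * ψ (η⁻¹ • x)) - (∫ y in cube d, ψ y) * ∫ x, g x
      = ∫ t in cube d, ((∫ x, g x * ψ (η⁻¹ • x)) - ∫ x, g (x + η • t) * ψ (η⁻¹ • x)) := by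
    rw [integral_sub (integrable_const _) hint, setIntegral_const,
      integral_cube_integral_comp_add_smul_mul hg hψc hψ hC hη]
    simp [measureReal_def, volume_cube]
  have hpt : ∀ t ∈ cube d,
      ‖(∫ x, g x * ψ (η⁻¹ • x)) - ∫ x, g (x + η • t) * ψ (η⁻¹ • x)‖ ≤ C * B := by
    intro t ht
    rw [← integral_sub (by simpa using hgψ 0) (hgψ t)]
    calc ‖∫ x, (g x * ψ (η⁻¹ • x) - g (x + η • t) * ψ (η⁻¹ • x))‖
        ≤ ∫ x, C * |g (x + η • t) - g x| := by
          refine norm_integral_le_of_norm_le (((hg.comp_add_right _).sub hg).abs.const_mul C)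
            (.of_forall fun x => ?_)
          rw [← sub_mul, norm_mul, Real.norm_eq_abs, Real.norm_eq_abs, abs_sub_comm, mul_comm]
          exact mul_le_mul_of_nonneg_right (hC _) (abs_nonneg _)
      _ = C * translationL1Dist g (η • t) := integral_const_mul _ _
      _ ≤ C * B := mul_le_mul_of_nonneg_left (hB t ht) hC0
  calc |(∫ x, g x * ψ (η⁻¹ • x)) - (∫ y in cube d, ψ y) * ∫ x, g x|
      = ‖∫ t in cube d, ((∫ x, g x * ψ (η⁻¹ • x)) - ∫ x, g (x + η • t) * ψ (η⁻¹ • x))‖ := by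
        rw [hmean, Real.norm_eq_abs]
    _ ≤ C * B * volume.real (cube d) :=
        norm_setIntegral_le_of_norm_le_const (by simp [volume_cube]) hpt
    _ = C * B := by simp [measureReal_def, volume_cube]

end averaging

section twoScale

variable {d : ℕ} {ι : Type*} {l : Filter ι}

theorem tendsto_integral_mul_comp_inv_smul_sub {g : ι → (Fin d → ℝ) → ℝ} {ψ : (Fin d → ℝ) → ℝ}
    {η : ι → ℝ} (hg : ∀ i, Integrable (g i)) (hψc : Continuous ψ) (hψ : ZPeriodic ψ)
    (hη : ∀ᶠ i in l, η i ≠ 0)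
    (hmod : TendstoUniformlyOn (fun i t => translationL1Dist (g i) (η i • t)) 0 l (cube d)) :
    Tendsto (fun i => (∫ x, g i x * ψ ((η i)⁻¹ • x)) - (∫ y in cube d, ψ y) * ∫ x, g i x) l
      (𝓝 0) := by
  obtain ⟨C, hC⟩ := hψ.exists_abs_le hψc
  have hC0 : 0 ≤ C := (abs_nonneg _).trans (hC 0)
  rw [Metric.tendsto_nhds]
  intro r hr
  filter_upwards [Metric.tendstoUniformlyOn_iff.1 hmod (r / (C + 1)) (by positivity), hη]
    with i hmodi hηi
  have hB : ∀ t ∈ cube d, translationL1Dist (g i) (η i • t) ≤ r / (C + 1) := fun t ht => by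
    simpa [abs_of_nonneg (translationL1Dist_nonneg _ _)] using (hmodi t ht).le
  rw [dist_zero_right, Real.norm_eq_abs]
  calc _ ≤ C * (r / (C + 1)) := abs_integral_mul_comp_inv_smul_sub_le (hg i) hψc hψ hC hηi hB
    _ < r := by
      rw [mul_div_assoc', div_lt_iff₀ (by positivity)]
      nlinarith

lemma tendstoUniformlyOn_translationL1Dist_smul {θ : (Fin d → ℝ) → ℝ} (hθc : Continuous θ)
    (hθs : HasCompactSupport θ) {η : ι → ℝ} (hη : Tendsto η l (𝓝 0)) :
    TendstoUniformlyOn (fun i t => translationL1Dist θ (η i • t)) 0 l (cube d) := by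
  rw [Metric.tendstoUniformlyOn_iff]
  intro r hr
  obtain ⟨s, hs, hθmod⟩ :=
    Metric.tendsto_nhds_nhds.1 (tendsto_translationL1Dist_zero hθc hθs) r hr
  filter_upwards [Metric.tendsto_nhds.1 hη s hs] with i hi t ht
  have hsmall : dist (η i • t) 0 < s := by
    rw [dist_zero_right]
    exact (norm_smul_le_of_mem_cube _ ht).trans_lt (by simpa using hi)
  simpa [dist_comm] using hθmod hsmall

lemma tendstoUniformlyOn_translationL1Dist_mul_comp_inv_smul {θ φ : (Fin d → ℝ) → ℝ}
    (hθc : Continuous θ) (hθs : HasCompactSupport θ) (hφc : Continuous φ) (hφ : ZPeriodic φ)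
    {ε δ : ι → ℝ} (hε : ∀ᶠ i in l, ε i ≠ 0) (hεδ : Tendsto (fun i => ε i * δ i) l (𝓝 0))
    (hδ : Tendsto δ l (𝓝 0)) :
    TendstoUniformlyOn
      (fun i t => translationL1Dist (fun x => θ x * φ ((ε i)⁻¹ • x)) ((ε i * δ i) • t)) 0 l
      (cube d) := by
  obtain ⟨C, hC⟩ := hφ.exists_abs_le hφc
  have hC0 : 0 ≤ C := (abs_nonneg _).trans (hC 0)
  have hT0 : 0 ≤ ∫ x, |θ x| := integral_nonneg fun _ => abs_nonneg _
  rw [Metric.tendstoUniformlyOn_iff]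
  intro r hr
  obtain ⟨s, hs, hφs⟩ := Metric.uniformContinuous_iff.1 (hφ.uniformContinuous hφc)
    (r / 2 / ((∫ x, |θ x|) + 1)) (by positivity)
  filter_upwards [Metric.tendstoUniformlyOn_iff.1
      (tendstoUniformlyOn_translationL1Dist_smul hθc hθs hεδ) (r / 2 / (C + 1)) (by positivity),
    Metric.tendsto_nhds.1 hδ s hs, hε] with i hθi hδi hεi t ht
  have hφi (x : Fin d → ℝ) : |φ ((ε i)⁻¹ • (x + (ε i * δ i) • t)) - φ ((ε i)⁻¹ • x)|
      ≤ r / 2 / ((∫ x, |θ x|) + 1) := by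
    rw [smul_add, smul_smul, ← mul_assoc, inv_mul_cancel₀ hεi, one_mul, ← Real.dist_eq]
    refine (hφs ?_).le
    rw [dist_eq_norm, add_sub_cancel_left]
    exact (norm_smul_le_of_mem_cube _ ht).trans_lt (by simpa using hδi)
  have hθ : translationL1Dist θ ((ε i * δ i) • t) ≤ r / 2 / (C + 1) := by
    simpa [abs_of_nonneg (translationL1Dist_nonneg _ _)] using (hθi t ht).le
  rw [Pi.zero_apply, dist_zero_left, Real.norm_eq_abs,
    abs_of_nonneg (translationL1Dist_nonneg _ _)]
  refine (translationL1Dist_mul_le (hθc.integrable_of_hasCompactSupport hθs)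
    (fun x => hC _) hφi).trans_lt ?_
  have h1 : C * translationL1Dist θ ((ε i * δ i) • t) ≤ r / 2 := by
    calc C * translationL1Dist θ ((ε i * δ i) • t) ≤ (C + 1) * (r / 2 / (C + 1)) :=
          mul_le_mul (by linarith) hθ (translationL1Dist_nonneg _ _) (by linarith)
      _ = r / 2 := by field_simp
  have h2 : r / 2 / ((∫ x, |θ x|) + 1) * ∫ x, |θ x| < r / 2 := by
    rw [div_mul_eq_mul_div, div_lt_iff₀ (by positivity)]
    nlinarith
  linarith

end twoScale

theorem statement1_general (d : ℕ) (Ω : Set (Fin d → ℝ))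
    (θ φ ψ : (Fin d → ℝ) → ℝ) (δ : ℝ → ℝ)
    (hθc : Continuous θ) (hθs : HasCompactSupport θ) (hθΩ : tsupport θ ⊆ Ω)
    (hφc : Continuous φ) (hφp : ZPeriodic φ)
    (hψc : Continuous ψ) (hψp : ZPeriodic ψ)
    (hδpos : ∀ ε : ℝ, 0 < ε → 0 < δ ε)
    (hδ0 : Tendsto δ (𝓝[>] (0:ℝ)) (𝓝 0)) :
    Tendsto (fun ε : ℝ => ∫ x in Ω, θ x * φ (ε⁻¹ • x) * ψ ((ε * δ ε)⁻¹ • x))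
      (𝓝[>] (0:ℝ))
      (𝓝 ((∫ y in cube d, ψ y) * (∫ z in cube d, φ z) * ∫ x in Ω, θ x)) := by
  have hθΩ' (x : Fin d → ℝ) (hx : x ∉ Ω) : θ x = 0 :=
    image_eq_zero_of_notMem_tsupport fun h => hx (hθΩ h)
  rw [setIntegral_eq_integral_of_forall_compl_eq_zero hθΩ']
  refine Tendsto.congr (fun ε => (setIntegral_eq_integral_of_forall_compl_eq_zero
    fun x hx => by simp [hθΩ' x hx]).symm) ?_
  have hid : Tendsto (fun ε : ℝ => ε) (𝓝[>] 0) (𝓝 0) := tendsto_nhdsWithin_of_tendsto_nhds tendsto_id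
  have hεδ : Tendsto (fun ε => ε * δ ε) (𝓝[>] 0) (𝓝 0) := by simpa using hid.mul hδ0
  have hε : ∀ᶠ ε : ℝ in 𝓝[>] 0, ε ≠ 0 := eventually_mem_nhdsWithin.mono fun _ h => h.ne'
  have hεδ0 : ∀ᶠ ε : ℝ in 𝓝[>] 0, ε * δ ε ≠ 0 :=
    eventually_mem_nhdsWithin.mono fun ε h => (mul_pos h (hδpos ε h)).ne'
  have hfast := tendsto_integral_mul_comp_inv_smul_sub
    (fun ε => (hθc.mul (hφc.comp (continuous_const_smul ε⁻¹))).integrable_of_hasCompactSupport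
      hθs.mul_right) hψc hψp hεδ0
    (tendstoUniformlyOn_translationL1Dist_mul_comp_inv_smul hθc hθs hφc hφp hε hεδ hδ0)
  have hslow := tendsto_integral_mul_comp_inv_smul_sub (g := fun _ => θ)
    (fun _ => hθc.integrable_of_hasCompactSupport hθs) hφc hφp hε
    (tendstoUniformlyOn_translationL1Dist_smul hθc hθs hid)
  have hmean : Tendsto (fun ε : ℝ => ∫ x, θ x * φ (ε⁻¹ • x)) (𝓝[>] 0)
      (𝓝 ((∫ z in cube d, φ z) * ∫ x, θ x)) := by
    simpa using hslow.add_const ((∫ z in cube d, φ z) * ∫ x, θ x)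
  simpa [mul_assoc] using hfast.add (hmean.const_mul (∫ y in cube d, ψ y))

/-- for `θ` continuous with compact support in the open set `Ω`,
`φ, ψ` continuous and `ℤ^d`-periodic, and `δ : (0,∞) → (0,∞)` with `δ(ε) → 0` as
`ε → 0⁺`, one has
`∫_Ω θ(x) φ(x/ε) ψ(x/(ε δ(ε))) dx → (∫ ψ)(∫ φ)(∫_Ω θ)` as `ε → 0⁺`. -/
theorem statement1 (d : ℕ) (Ω : Set (Fin d → ℝ)) (hΩ : IsOpen Ω)
    (θ φ ψ : (Fin d → ℝ) → ℝ) (δ : ℝ → ℝ)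
    (hθc : Continuous θ) (hθs : HasCompactSupport θ) (hθΩ : tsupport θ ⊆ Ω)
    (hφc : Continuous φ) (hφp : ZPeriodic φ)
    (hψc : Continuous ψ) (hψp : ZPeriodic ψ)
    (hδpos : ∀ ε : ℝ, 0 < ε → 0 < δ ε)
    (hδ0 : Tendsto δ (𝓝[>] (0:ℝ)) (𝓝 0)) :
    Tendsto (fun ε : ℝ => ∫ x in Ω, θ x * φ (ε⁻¹ • x) * ψ ((ε * δ ε)⁻¹ • x))
      (𝓝[>] (0:ℝ))
      (𝓝 ((∫ y in cube d, ψ y) * (∫ z in cube d, φ z) * ∫ x in Ω, θ x)) :=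
  statement1_general d Ω θ φ ψ δ hθc hθs hθΩ hφc hφp hψc hψp hδpos hδ0
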